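/- Let ℐ be an object ideal of an additive category 𝒜. Then ℐ is covering if and only if Ob(ℐ) is covering. Moreover, in the 'only if' direction, the domain of any ℐ-cover of an object A belongs to Ob(ℐ). -/

import Mathlib

open CategoryTheory Limits

universe v u

variable (C : Type u) [Category.{v} C] [Preadditive C] [HasFiniteBiproducts C]

/-- An ideal of an additive category: an additive subgroup of each Hom-group,
closed under composition with arbitrary morphisms on both sides. -/
structure CatIdeal where
  carrier : ∀ (A B : C), AddSubgroup (A ⟶ B)
  comp_mem : ∀ ⦃X A B Y : C⦄ (h : X ⟶ A) (g : A ⟶ B) (f : B ⟶ Y),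
    g ∈ carrier A B → h ≫ g ≫ f ∈ carrier X Y

variable {C}

/-- The objects of an ideal: those objects whose identity morphism belongs to the ideal. -/
def CatIdeal.Ob (I : CatIdeal C) : Set C := {A | 𝟙 A ∈ I.carrier A A}

/-- An ideal is an object ideal if every morphism in it factors through one of its objects. -/
def CatIdeal.IsObjectIdeal (I : CatIdeal C) : Prop :=
  ∀ ⦃A B : C⦄, ∀ g ∈ I.carrier A B,
    ∃ (X : C) (u : A ⟶ X) (v : X ⟶ B), X ∈ I.Ob ∧ u ≫ v = g

/-- `f : X ⟶ A` is an `I`-precover of `A`. -/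
def CatIdeal.IsPrecover (I : CatIdeal C) {X A : C} (f : X ⟶ A) : Prop :=
  f ∈ I.carrier X A ∧
    ∀ ⦃X' : C⦄ (f' : X' ⟶ A), f' ∈ I.carrier X' A → ∃ g : X' ⟶ X, g ≫ f = f'

/-- `f : X ⟶ A` is an `I`-cover of `A`. -/
def CatIdeal.IsCover (I : CatIdeal C) {X A : C} (f : X ⟶ A) : Prop :=
  I.IsPrecover f ∧ ∀ g : X ⟶ X, g ≫ f = f → IsIso g

/-- `f : A ⟶ X` is an `I`-preenvelope of `A`. -/
def CatIdeal.IsPreenvelope (I : CatIdeal C) {A X : C} (f : A ⟶ X) : Prop :=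
  f ∈ I.carrier A X ∧
    ∀ ⦃X' : C⦄ (f' : A ⟶ X'), f' ∈ I.carrier A X' → ∃ g : X ⟶ X', f ≫ g = f'

/-- `f : A ⟶ X` is an `I`-envelope of `A`. -/
def CatIdeal.IsEnvelope (I : CatIdeal C) {A X : C} (f : A ⟶ X) : Prop :=
  I.IsPreenvelope f ∧ ∀ g : X ⟶ X, f ≫ g = f → IsIso g

def CatIdeal.Precovering (I : CatIdeal C) : Prop :=
  ∀ A : C, ∃ (X : C) (f : X ⟶ A), I.IsPrecover f

def CatIdeal.Covering (I : CatIdeal C) : Prop :=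
  ∀ A : C, ∃ (X : C) (f : X ⟶ A), I.IsCover f

def CatIdeal.Preenveloping (I : CatIdeal C) : Prop :=
  ∀ A : C, ∃ (X : C) (f : A ⟶ X), I.IsPreenvelope f

def CatIdeal.Enveloping (I : CatIdeal C) : Prop :=
  ∀ A : C, ∃ (X : C) (f : A ⟶ X), I.IsEnvelope f

/-- `f : X ⟶ A` is an `𝒳`-precover of `A`, for a class of objects `𝒳`. -/
def Set.IsClassPrecover (𝒳 : Set C) {X A : C} (f : X ⟶ A) : Prop :=
  X ∈ 𝒳 ∧ ∀ ⦃X' : C⦄, X' ∈ 𝒳 → ∀ f' : X' ⟶ A, ∃ g : X' ⟶ X, g ≫ f = f'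

def Set.IsClassCover (𝒳 : Set C) {X A : C} (f : X ⟶ A) : Prop :=
  𝒳.IsClassPrecover f ∧ ∀ g : X ⟶ X, g ≫ f = f → IsIso g

/-- `f : A ⟶ X` is an `𝒳`-preenvelope of `A`, for a class of objects `𝒳`. -/
def Set.IsClassPreenvelope (𝒳 : Set C) {A X : C} (f : A ⟶ X) : Prop :=
  X ∈ 𝒳 ∧ ∀ ⦃X' : C⦄, X' ∈ 𝒳 → ∀ f' : A ⟶ X', ∃ g : X ⟶ X', f ≫ g = f'

def Set.IsClassEnvelope (𝒳 : Set C) {A X : C} (f : A ⟶ X) : Prop :=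
  𝒳.IsClassPreenvelope f ∧ ∀ g : X ⟶ X, f ≫ g = f → IsIso g

def Set.ClassPrecovering (𝒳 : Set C) : Prop :=
  ∀ A : C, ∃ (X : C) (f : X ⟶ A), 𝒳.IsClassPrecover f

def Set.ClassCovering (𝒳 : Set C) : Prop :=
  ∀ A : C, ∃ (X : C) (f : X ⟶ A), 𝒳.IsClassCover f

def Set.ClassPreenveloping (𝒳 : Set C) : Prop :=
  ∀ A : C, ∃ (X : C) (f : A ⟶ X), 𝒳.IsClassPreenvelope f

def Set.ClassEnveloping (𝒳 : Set C) : Prop :=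
  ∀ A : C, ∃ (X : C) (f : A ⟶ X), 𝒳.IsClassEnvelope f

/-! In an object ideal every morphism of `I` factors through `Ob(I)`, so `I`-precovers and
`Ob(I)`-precovers are tested against the same morphisms. What remains is that the domain `X` of
an `I`-cover `f` lies in `Ob(I)`: factor `f = u ≫ v` through `Y ∈ Ob(I)` and lift `v` along `f`
to `g`; then `(u ≫ g) ≫ f = f`, so `u ≫ g` is invertible by minimality and `X` is a retract
of `Y`. -/

namespace CatIdeal

omit [HasFiniteBiproducts C]

variable {I : CatIdeal C} {X Y A : C}

theorem mem_of_dom_mem_Ob (hY : Y ∈ I.Ob) (v : Y ⟶ A) : v ∈ I.carrier Y A := by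
  simpa using I.comp_mem (𝟙 Y) (𝟙 Y) v hY

theorem mem_Ob_of_retract (h : Retract X Y) (hY : Y ∈ I.Ob) : X ∈ I.Ob := by
  simpa [CatIdeal.Ob, h.retract] using I.comp_mem h.i (𝟙 Y) h.r hY

theorem IsPrecover.isClassPrecover {f : X ⟶ A} (hf : I.IsPrecover f) (hX : X ∈ I.Ob) :
    I.Ob.IsClassPrecover f :=
  ⟨hX, fun _ hX' f' => hf.2 f' (mem_of_dom_mem_Ob hX' f')⟩

theorem isPrecover_of_isClassPrecover (hI : I.IsObjectIdeal) {f : X ⟶ A}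
    (hf : I.Ob.IsClassPrecover f) : I.IsPrecover f := by
  refine ⟨mem_of_dom_mem_Ob hf.1 f, fun X' f' hf' => ?_⟩
  obtain ⟨Y, u, v, hY, rfl⟩ := hI f' hf'
  obtain ⟨g, rfl⟩ := hf.2 hY v
  exact ⟨u ≫ g, Category.assoc _ _ _⟩

theorem IsCover.dom_mem_Ob (hI : I.IsObjectIdeal) {f : X ⟶ A} (hf : I.IsCover f) :
    X ∈ I.Ob := by
  obtain ⟨Y, u, v, hY, huv⟩ := hI f hf.1.1
  obtain ⟨g, hg⟩ := hf.1.2 v (mem_of_dom_mem_Ob hY v)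
  have : IsIso (u ≫ g) := hf.2 (u ≫ g) (by rw [Category.assoc, hg, huv])
  exact mem_Ob_of_retract ⟨u, g ≫ inv (u ≫ g), by rw [← Category.assoc, IsIso.hom_inv_id]⟩ hY

theorem isCover_iff_isClassCover (hI : I.IsObjectIdeal) {f : X ⟶ A} :
    I.IsCover f ↔ I.Ob.IsClassCover f :=
  ⟨fun hf => ⟨hf.1.isClassPrecover (hf.dom_mem_Ob hI), hf.2⟩,
    fun hf => ⟨isPrecover_of_isClassPrecover hI hf.1, hf.2⟩⟩

end CatIdeal

/-- an object ideal is covering iff its class of objects is covering;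
moreover, if `I` is covering then the domain of any `I`-cover lies in `Ob(I)`. -/
theorem covering_iff_ob_covering (I : CatIdeal C) (hI : I.IsObjectIdeal) :
    (I.Covering ↔ I.Ob.ClassCovering) ∧
      (I.Covering → ∀ ⦃X A : C⦄ (f : X ⟶ A), I.IsCover f → X ∈ I.Ob) :=
  ⟨forall_congr' fun _ => exists_congr fun _ => exists_congr fun _ =>
      CatIdeal.isCover_iff_isClassCover hI,
    fun _ _ _ _ hf => hf.dom_mem_Ob hI⟩
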